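/- (Power-unconstrained secrecy rate, weak interference.) Let 0 < a < 1 be a real number. For P̄ ≥ 0 define S(P̄) := sup { R_s(a, P1, P2) : 0 ≤ P1 ≤ P̄, 0 ≤ P2 ≤ P̄ }. Then S(P̄) tends to log₂(1/a) as P̄ → ∞. -/

import Mathlib

/-!
For `a < 1` the secrecy rate is that of the wiretap channel with the helper's signal treated
as noise, `g (P1 / (1 + a P2)) - g (a P1 / (1 + P2))`, with `P2` replaced by `0` when
`P1 ≤ P2`. This is half the logarithm of a ratio of signal-to-noise terms, and that ratio is at
most `1/a²` for all powers, so every rate is at most `log₂ (1/a)`. Conversely, at `P1 = t²`,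
`P2 = t` the ratio tends to `1/a²` as `t → ∞`, so the supremum is squeezed onto `log₂ (1/a)`.
-/

/-- `g x = (1/2) * log₂ (1 + x)` -/
noncomputable def g (x : ℝ) : ℝ := (1/2) * Real.logb 2 (1 + x)

/-- Achievable secrecy rate of the symmetric Gaussian wiretap channel
with a helping interferer. -/
noncomputable def Rs (a P1 P2 : ℝ) : ℝ :=
  if 1 + P2 ≤ a then 0
  else if 1 ≤ a then
    if P1 < P2 ∧ 1 + P1 < a then g P1 - g (a * P1 / (1 + P2))
    else if P1 < P2 ∧ a ≤ 1 + P1 then g (P1 + a * P2) - g (a * P1 + P2)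
    else 0
  else
    if P2 < P1 then g (P1 / (1 + a * P2)) - g (a * P1 / (1 + P2))
    else g P1 - g (a * P1)

open Filter Topology Real

noncomputable def weakRate (a P1 P2 : ℝ) : ℝ :=
  g (P1 / (1 + a * P2)) - g (a * P1 / (1 + P2))

lemma Rs_eq_weakRate {a : ℝ} (P1 : ℝ) {P2 : ℝ} (ha1 : a < 1) (hP2 : 0 ≤ P2) :
    Rs a P1 P2 = if P2 < P1 then weakRate a P1 P2 else weakRate a P1 0 := by
  rw [Rs, if_neg (by linarith), if_neg (by linarith)]
  simp only [weakRate, mul_zero, add_zero, div_one]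

lemma g_sub_g {x y : ℝ} (hx : 0 < 1 + x) (hy : 0 < 1 + y) :
    g x - g y = (1/2) * logb 2 ((1 + x) / (1 + y)) := by
  rw [g, g, logb_div hx.ne' hy.ne']
  ring

lemma weakRate_eq_half_logb {a P1 P2 : ℝ} (ha0 : 0 ≤ a) (hP1 : 0 ≤ P1) (hP2 : 0 ≤ P2) :
    weakRate a P1 P2 =
      (1/2) * logb 2 ((1 + P1 / (1 + a * P2)) / (1 + a * P1 / (1 + P2))) :=
  g_sub_g (by positivity) (by positivity)

lemma half_logb_le_logb_inv {a r : ℝ} (hr : 0 < r) (hra : r ≤ (1/a) ^ 2) :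
    (1/2) * logb 2 r ≤ logb 2 (1/a) := by
  have := logb_le_logb_of_le (b := 2) one_lt_two hr hra
  rw [logb_pow] at this
  push_cast at this
  linarith

lemma weakRate_le_logb_inv {a P1 P2 : ℝ} (ha0 : 0 < a) (ha1 : a ≤ 1)
    (hP1 : 0 ≤ P1) (hP2 : 0 ≤ P2) :
    weakRate a P1 P2 ≤ logb 2 (1/a) := by
  rw [weakRate_eq_half_logb ha0.le hP1 hP2]
  refine half_logb_le_logb_inv (by positivity) ?_
  rw [div_le_iff₀ (by positivity)]
  field_simp
  -- the difference of the two sides is `(1-a²)(1+P2)(1+aP2) + a(1-a)P1`, up to a positive factor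
  have h1 : 0 ≤ (1 - a) * (1 + a) * (1 + P2) * (1 + a * P2) := by
    have : 0 ≤ 1 - a := by linarith
    positivity
  have h2 : 0 ≤ a * P1 * (1 - a) := mul_nonneg (by positivity) (by linarith)
  nlinarith

lemma Rs_le_logb_inv {a P1 P2 : ℝ} (ha0 : 0 < a) (ha1 : a < 1) (hP1 : 0 ≤ P1) (hP2 : 0 ≤ P2) :
    Rs a P1 P2 ≤ logb 2 (1/a) := by
  rw [Rs_eq_weakRate P1 ha1 hP2]
  split_ifs
  · exact weakRate_le_logb_inv ha0 ha1.le hP1 hP2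
  · exact weakRate_le_logb_inv ha0 ha1.le hP1 le_rfl

lemma tendsto_weakRate_sq_self {a : ℝ} (ha0 : 0 < a) :
    Tendsto (fun t : ℝ => weakRate a (t ^ 2) t) atTop (𝓝 (logb 2 (1/a))) := by
  -- in the variable `u = t⁻¹` the signal-to-noise ratio is a rational function continuous at 0
  set G : ℝ → ℝ := fun u => (u ^ 2 + a * u + 1) * (u + 1) / ((u + a) * (u ^ 2 + u + a))
  have hG : Tendsto (fun t : ℝ => G t⁻¹) atTop (𝓝 ((1/a) ^ 2)) := by
    have hcont : ContinuousAt G 0 := by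
      apply ContinuousAt.div (by fun_prop) (by fun_prop)
      simpa using ha0.ne'
    have hG0 : G 0 = (1/a) ^ 2 := by simp [G]; ring
    rw [← hG0]
    exact hcont.tendsto.comp tendsto_inv_atTop_zero
  have hlimit : (1/2) * logb 2 ((1/a) ^ 2) = logb 2 (1/a) := by
    rw [logb_pow]; push_cast; ring
  rw [← hlimit]
  refine (((continuousAt_logb (by positivity)).tendsto.comp hG).const_mul _).congr' ?_
  filter_upwards [eventually_gt_atTop 0] with t ht
  rw [weakRate_eq_half_logb ha0.le (by positivity) ht.le]
  simp only [Function.comp_apply, G]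
  congr 2
  field_simp

lemma tendsto_weakRate_self_sqrt {a : ℝ} (ha0 : 0 < a) :
    Tendsto (fun P : ℝ => weakRate a P √P) atTop (𝓝 (logb 2 (1/a))) := by
  refine ((tendsto_weakRate_sq_self ha0).comp tendsto_sqrt_atTop).congr' ?_
  filter_upwards [eventually_ge_atTop 0] with P hP
  simp only [Function.comp_apply, sq_sqrt hP]

/-- Power-unconstrained secrecy rate, weak interference: the supremum of
the secrecy rate over powers bounded by `P̄` tends to `log₂ (1/a)`. -/
theorem power_unconstrained_weak (a : ℝ) (ha0 : 0 < a) (ha1 : a < 1) :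
    Tendsto
      (fun Pbar : ℝ =>
        sSup {r : ℝ | ∃ P1 P2 : ℝ, 0 ≤ P1 ∧ P1 ≤ Pbar ∧ 0 ≤ P2 ∧ P2 ≤ Pbar ∧
          r = Rs a P1 P2})
      atTop (nhds (Real.logb 2 (1/a))) := by
  set S : ℝ → Set ℝ := fun Pbar => {r : ℝ | ∃ P1 P2 : ℝ, 0 ≤ P1 ∧ P1 ≤ Pbar ∧ 0 ≤ P2 ∧
    P2 ≤ Pbar ∧ r = Rs a P1 P2}
  have hle : ∀ Pbar, ∀ r ∈ S Pbar, r ≤ logb 2 (1/a) := by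
    rintro Pbar r ⟨P1, P2, hP1, -, hP2, -, rfl⟩
    exact Rs_le_logb_inv ha0 ha1 hP1 hP2
  have hmem : ∀ Pbar, 1 < Pbar → weakRate a Pbar √Pbar ∈ S Pbar := by
    intro Pbar hPbar
    have hsqrt : √Pbar < Pbar := sqrt_lt_self_iff.mpr hPbar
    refine ⟨Pbar, √Pbar, by linarith, le_rfl, sqrt_nonneg _, hsqrt.le, ?_⟩
    rw [Rs_eq_weakRate Pbar ha1 (sqrt_nonneg _), if_pos hsqrt]
  refine tendsto_of_tendsto_of_tendsto_of_le_of_le' (tendsto_weakRate_self_sqrt ha0)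
    tendsto_const_nhds ?_ ?_
  · filter_upwards [eventually_gt_atTop 1] with Pbar hPbar
    exact le_csSup ⟨_, hle Pbar⟩ (hmem Pbar hPbar)
  · filter_upwards [eventually_gt_atTop 1] with Pbar hPbar
    exact csSup_le ⟨_, hmem Pbar hPbar⟩ (hle Pbar)
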